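/- Let X ∈ ℝ^{N×D} have full column rank D, Y ∈ ℝ^{N×C}, and 1 ≤ K ≤ D, and let Ŷ := X(XᵀX)⁻¹XᵀY be the OLS prediction of Y from X. Then the minimum of ‖XVW − Y‖_F² over all V ∈ ℝ^{D×K} and W ∈ ℝ^{K×C} is attained and equals ‖Y‖_F² − (λ_1(ŶᵀŶ) + … + λ_K(ŶᵀŶ)), the squared Frobenius norm of Y minus the sum of the K largest eigenvalues of ŶᵀŶ. -/

import Mathlib

open Matrix BigOperators

noncomputable section

/-- Squared Frobenius norm of a real matrix. -/
def frobSq {m n : Type*} [Fintype m] [Fintype n] (M : Matrix m n ℝ) : ℝ :=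
  ∑ i, ∑ j, (M i j) ^ 2

/-- `AᵀA` is Hermitian over `ℝ`. -/
theorem isHermitian_tmul {m n : ℕ} (A : Matrix (Fin m) (Fin n) ℝ) :
    (Aᵀ * A).IsHermitian := by
  simpa [Matrix.conjTranspose_eq_transpose_of_trivial] using
    Matrix.isHermitian_conjTranspose_mul_self A

/-- `AAᵀ` is Hermitian over `ℝ`. -/
theorem isHermitian_mult {m n : ℕ} (A : Matrix (Fin m) (Fin n) ℝ) :
    (A * Aᵀ).IsHermitian := by
  simpa [Matrix.conjTranspose_eq_transpose_of_trivial] using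
    Matrix.isHermitian_mul_conjTranspose_self A

/-- The `i`-th eigenvalue of a real symmetric (Hermitian) matrix, in decreasing order
(`eigDesc hM 0` is the largest eigenvalue, counted with multiplicity). -/
def eigDesc {n : ℕ} {M : Matrix (Fin n) (Fin n) ℝ} (hM : M.IsHermitian) (i : Fin n) : ℝ :=
  hM.eigenvalues (Tuple.sort hM.eigenvalues i.rev)

/-- Sum of the `K` largest eigenvalues of a Hermitian matrix. -/
def sumTopEig {n : ℕ} {M : Matrix (Fin n) (Fin n) ℝ} (hM : M.IsHermitian) (K : ℕ) : ℝ :=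
  ∑ i : Fin n, if (i : ℕ) < K then eigDesc hM i else 0

/-- Sum of the eigenvalues of a Hermitian matrix after the `K` largest ones. -/
def sumTailEig {n : ℕ} {M : Matrix (Fin n) (Fin n) ℝ} (hM : M.IsHermitian) (K : ℕ) : ℝ :=
  ∑ i : Fin n, if K ≤ (i : ℕ) then eigDesc hM i else 0

/-- Top-`K` eigenspace of a Hermitian matrix: the sum of the eigenspaces associated with
its `K` largest eigenvalues. -/
def topEigSpace {n : ℕ} {M : Matrix (Fin n) (Fin n) ℝ} (hM : M.IsHermitian) (K : ℕ) :
    Submodule ℝ (Fin n → ℝ) :=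
  ⨆ i : {i : Fin n // (i : ℕ) < K},
    LinearMap.ker (M.mulVecLin - eigDesc hM i.1 • LinearMap.id)

/-- Ordinary least squares prediction of `Y` from `X`. -/
def ols {N D C : ℕ} (X : Matrix (Fin N) (Fin D) ℝ) (Y : Matrix (Fin N) (Fin C) ℝ) :
    Matrix (Fin N) (Fin C) ℝ :=
  X * (Xᵀ * X)⁻¹ * Xᵀ * Y

/-!
Since `Xᵀ (Y - Ŷ) = 0` and `Ŷ = X G`, Pythagoras gives `‖X M - Y‖² = ‖X M - Ŷ‖² + ‖Ŷ - Y‖²` and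
`‖Y‖² = ‖Ŷ‖² + ‖Ŷ - Y‖²`, so the problem is the best approximation of `Ŷ` by products `B W` with
`K` inner columns; an optimal `B = Ŷ Wᵀ = X (G Wᵀ)` is again of the form `X V`.
If the rows of `V` are an orthonormal basis of the row space of `W`, then
`‖B W - Ŷ‖² ≥ ‖Ŷ Vᵀ V - Ŷ‖² = ‖Ŷ‖² - Tr (V ŶᵀŶ Vᵀ)`, and by Ky Fan's maximum principle this trace is
at most the sum of the `K` largest eigenvalues of `ŶᵀŶ`, with equality when the rows of `V` are
the corresponding eigenvectors.
-/

open Finset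

section Frobenius

variable {m n k : Type*} [Fintype m] [Fintype n] [Fintype k]

lemma frobSq_eq_trace (M : Matrix m n ℝ) : frobSq M = (Mᵀ * M).trace := by
  simp only [frobSq, trace, Matrix.diag, mul_apply, transpose_apply, sq]
  exact sum_comm

lemma frobSq_nonneg (M : Matrix m n ℝ) : 0 ≤ frobSq M := by
  unfold frobSq; positivity

lemma frobSq_transpose (M : Matrix m n ℝ) : frobSq Mᵀ = frobSq M := by
  simp only [frobSq, transpose_apply]
  exact sum_comm

lemma frobSq_neg (M : Matrix m n ℝ) : frobSq (-M) = frobSq M := by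
  simp [frobSq]

lemma frobSq_sub_comm (M N : Matrix m n ℝ) : frobSq (M - N) = frobSq (N - M) := by
  rw [← frobSq_neg, neg_sub]

lemma frobSq_add_of_transpose_mul_eq_zero {M N : Matrix m n ℝ} (h : Mᵀ * N = 0) :
    frobSq (M + N) = frobSq M + frobSq N := by
  have h' : Nᵀ * M = 0 := by simpa using congrArg transpose h
  rw [frobSq_eq_trace, frobSq_eq_trace, frobSq_eq_trace, transpose_add, Matrix.add_mul,
    Matrix.mul_add, Matrix.mul_add, h, h', add_zero, zero_add]
  exact trace_add _ _

lemma frobSq_add_of_mul_transpose_eq_zero {M N : Matrix m n ℝ} (h : M * Nᵀ = 0) :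
    frobSq (M + N) = frobSq M + frobSq N := by
  rw [← frobSq_transpose, transpose_add, frobSq_add_of_transpose_mul_eq_zero (by simpa),
    frobSq_transpose, frobSq_transpose]

lemma frobSq_mul_transpose (A : Matrix m n ℝ) (V : Matrix k n ℝ) :
    frobSq (A * Vᵀ) = (V * (Aᵀ * A) * Vᵀ).trace := by
  rw [frobSq_eq_trace, transpose_mul, transpose_transpose]
  simp only [Matrix.mul_assoc]

end Frobenius

lemma isUnit_det_transpose_mul_self {m n : Type*} [Fintype m] [Fintype n] [DecidableEq n]
    (X : Matrix m n ℝ) (hrank : X.rank = Fintype.card n) : IsUnit (Xᵀ * X).det := by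
  rw [← isUnit_iff_isUnit_det, ← mulVec_surjective_iff_isUnit]
  refine (LinearMap.range_eq_top (f := (Xᵀ * X).mulVecLin)).mp (Submodule.eq_top_of_finrank_eq ?_)
  rw [← Matrix.rank, rank_transpose_mul_self, hrank, Module.finrank_fintype_fun_eq_card]

lemma transpose_mul_sub_ols_eq_zero {N D C : ℕ} (X : Matrix (Fin N) (Fin D) ℝ)
    (Y : Matrix (Fin N) (Fin C) ℝ) (hrank : X.rank = D) : Xᵀ * (Y - ols X Y) = 0 := by
  have hdet := isUnit_det_transpose_mul_self X (by simpa using hrank)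
  simp only [ols, Matrix.mul_sub, ← Matrix.mul_assoc, mul_nonsing_inv _ hdet, Matrix.one_mul,
    sub_self]

lemma frobSq_mul_sub_eq_add {m n k : Type*} [Fintype m] [Fintype n] [Fintype k]
    {X : Matrix m n ℝ} {Y : Matrix m k ℝ} (G : Matrix n k ℝ) (hG : Xᵀ * (Y - X * G) = 0)
    (M : Matrix n k ℝ) :
    frobSq (X * M - Y) = frobSq (X * M - X * G) + frobSq (X * G - Y) := by
  rw [← frobSq_add_of_transpose_mul_eq_zero, sub_add_sub_cancel]
  rw [← Matrix.mul_sub, transpose_mul, Matrix.mul_assoc, ← neg_sub Y, Matrix.mul_neg, hG,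
    neg_zero, Matrix.mul_zero]

section OrthonormalRows

variable {m n k : Type*} [Fintype m] [Fintype n] [Fintype k] [DecidableEq k]
  {V : Matrix k n ℝ}

lemma frobSq_mul_of_mul_transpose_eq_one (hV : V * Vᵀ = 1) (M : Matrix m k ℝ) :
    frobSq (M * V) = frobSq M := by
  rw [← frobSq_transpose, frobSq_eq_trace, ← frobSq_transpose M, frobSq_eq_trace]
  simp only [transpose_transpose, transpose_mul, Matrix.mul_assoc, ← Matrix.mul_assoc V, hV,
    Matrix.one_mul]

lemma mul_transpose_mul_cancel_left (hV : V * Vᵀ = 1) {p : Type*} (M : Matrix k p ℝ) :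
    V * (Vᵀ * M) = M := by
  rw [← Matrix.mul_assoc, hV, Matrix.one_mul]

lemma frobSq_mul_transpose_mul_sub (hV : V * Vᵀ = 1) (A : Matrix m n ℝ) :
    frobSq (A * Vᵀ * V - A) = frobSq A - frobSq (A * Vᵀ) := by
  have hcross : A * Vᵀ * V * (A - A * Vᵀ * V)ᵀ = 0 := by
    simp only [transpose_sub, transpose_mul, transpose_transpose, Matrix.mul_sub, Matrix.mul_assoc,
      mul_transpose_mul_cancel_left hV, sub_self]
  have h := frobSq_add_of_mul_transpose_eq_zero hcross
  rw [add_sub_cancel, frobSq_mul_of_mul_transpose_eq_one hV] at h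
  rw [frobSq_sub_comm, h, add_sub_cancel_left]

lemma frobSq_mul_sub (hV : V * Vᵀ = 1) (A : Matrix m n ℝ) (B : Matrix m k ℝ) :
    frobSq (B * V - A) = frobSq (B - A * Vᵀ) + frobSq (A * Vᵀ * V - A) := by
  have hcross : (B - A * Vᵀ) * V * (A * Vᵀ * V - A)ᵀ = 0 := by
    simp only [transpose_sub, transpose_mul, transpose_transpose, Matrix.mul_sub, Matrix.mul_assoc,
      mul_transpose_mul_cancel_left hV, sub_self]
  rw [← frobSq_mul_of_mul_transpose_eq_one hV (B - A * Vᵀ),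
    ← frobSq_add_of_mul_transpose_eq_zero hcross, Matrix.sub_mul, sub_add_sub_cancel]

lemma frobSq_mul_transpose_mul_sub_le (hV : V * Vᵀ = 1) (A : Matrix m n ℝ) (B : Matrix m k ℝ) :
    frobSq (A * Vᵀ * V - A) ≤ frobSq (B * V - A) := by
  rw [frobSq_mul_sub hV A B]
  exact le_add_of_nonneg_left (frobSq_nonneg (B - A * Vᵀ))

end OrthonormalRows

/-- The bathtub principle. -/
lemma sum_mul_le_sum_ite_lt_of_antitone {n K : ℕ} {lam t : Fin n → ℝ} (hlam : Antitone lam)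
    (hlam0 : ∀ i, 0 ≤ lam i) (ht0 : ∀ i, 0 ≤ t i) (ht1 : ∀ i, t i ≤ 1) (hsum : ∑ i, t i ≤ K) :
    ∑ i, lam i * t i ≤ ∑ i : Fin n, if (i : ℕ) < K then lam i else 0 := by
  set e : Fin n → ℝ := fun i => if (i : ℕ) < K then 1 else 0
  -- `μ` separates the first `K` terms of `lam` from the others
  set μ : ℝ := if h : K < n then lam ⟨K, h⟩ else 0
  have hμ0 : 0 ≤ μ := by unfold μ; split_ifs <;> simp [hlam0]
  have hterm : ∀ i, lam i * t i ≤ lam i * e i + μ * (t i - e i) := by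
    intro i
    by_cases hi : (i : ℕ) < K
    · have : μ ≤ lam i := by
        unfold μ; split_ifs
        · exact hlam (Fin.le_def.mpr hi.le)
        · exact hlam0 i
      simp only [e, if_pos hi]
      nlinarith [ht1 i]
    · have : lam i ≤ μ := by
        unfold μ; split_ifs with h
        · exact hlam (Fin.le_def.mpr (not_lt.mp hi))
        · exact absurd (i.isLt.trans_le (not_lt.mp h)) hi
      simp only [e, if_neg hi]
      nlinarith [ht0 i]
  have hsum_e : ∑ i, t i ≤ ∑ i, e i := by
    simp only [e, sum_boole, Fin.card_filter_val_lt, Nat.cast_min, le_min_iff]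
    refine ⟨?_, hsum⟩
    simpa using sum_le_sum fun i (_ : i ∈ univ) => ht1 i
  calc ∑ i, lam i * t i ≤ ∑ i, (lam i * e i + μ * (t i - e i)) := sum_le_sum fun i _ => hterm i
    _ = ∑ i, lam i * e i + μ * (∑ i, t i - ∑ i, e i) := by
      rw [sum_add_distrib, ← sum_sub_distrib, mul_sum]
    _ ≤ ∑ i, lam i * e i := by nlinarith
    _ = ∑ i : Fin n, if (i : ℕ) < K then lam i else 0 := by simp [e]

section Spectral

variable {n : ℕ} {S : Matrix (Fin n) (Fin n) ℝ}

lemma eigDesc_antitone (hS : S.IsHermitian) : Antitone (eigDesc hS) :=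
  fun _ _ hij => Tuple.monotone_sort hS.eigenvalues (Fin.rev_le_rev.mpr hij)

def eigDescPerm (hS : S.IsHermitian) : Equiv.Perm (Fin n) :=
  Fin.revPerm.trans (Tuple.sort hS.eigenvalues)

lemma eigDesc_eq (hS : S.IsHermitian) (i : Fin n) :
    eigDesc hS i = hS.eigenvalues (eigDescPerm hS i) := rfl

lemma transpose_eigenvectorUnitary_mul_self (hS : S.IsHermitian) :
    (hS.eigenvectorUnitary : Matrix (Fin n) (Fin n) ℝ)ᵀ * hS.eigenvectorUnitary = 1 := by
  simpa [star_eq_conjTranspose] using Unitary.coe_star_mul_self hS.eigenvectorUnitary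

lemma transpose_eigenvectorUnitary_mul_mul (hS : S.IsHermitian) :
    (hS.eigenvectorUnitary : Matrix (Fin n) (Fin n) ℝ)ᵀ * S * hS.eigenvectorUnitary =
      diagonal hS.eigenvalues := by
  simpa [Unitary.conjStarAlgAut_star_apply, star_eq_conjTranspose] using
    hS.conjStarAlgAut_star_eigenvectorUnitary

lemma eq_eigenvectorUnitary_mul_diagonal_mul_transpose (hS : S.IsHermitian) :
    S = (hS.eigenvectorUnitary : Matrix (Fin n) (Fin n) ℝ) * diagonal hS.eigenvalues *
      (hS.eigenvectorUnitary : Matrix (Fin n) (Fin n) ℝ)ᵀ := by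
  simpa [Unitary.conjStarAlgAut_apply, star_eq_conjTranspose] using hS.spectral_theorem

lemma trace_mul_diagonal_mul_transpose {r : Type*} [Fintype r] (M : Matrix r (Fin n) ℝ)
    (d : Fin n → ℝ) : (M * diagonal d * Mᵀ).trace = ∑ p, d p * (Mᵀ * M) p p := by
  simp only [trace, Matrix.diag, mul_apply, diagonal_apply, mul_ite, mul_zero, sum_ite_eq',
    mem_univ, if_true, transpose_apply, mul_sum]
  rw [sum_comm]
  exact sum_congr rfl fun p _ => sum_congr rfl fun j _ => by ring

lemma diag_transpose_mul_self_nonneg {r : Type*} [Fintype r] (M : Matrix r (Fin n) ℝ)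
    (p : Fin n) : 0 ≤ (Mᵀ * M) p p :=
  sum_nonneg fun j _ => mul_self_nonneg (M j p)

lemma diag_transpose_mul_self_le_one {r : Type*} [Fintype r] [DecidableEq r]
    {M : Matrix r (Fin n) ℝ} (hM : M * Mᵀ = 1) (p : Fin n) : (Mᵀ * M) p p ≤ 1 := by
  set P := Mᵀ * M
  have hidem : P * P = P := by
    simp only [P, Matrix.mul_assoc, ← Matrix.mul_assoc M, hM, Matrix.one_mul]
  have hsymm : ∀ q, P q p = P p q := fun q => by
    simp only [P, mul_apply, transpose_apply, mul_comm]
  -- `P` is an orthogonal projection, so `P p p = ∑ q, P p q ^ 2 ≥ P p p ^ 2`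
  have hsq : P p p ^ 2 ≤ P p p := by
    conv_rhs => rw [← hidem, mul_apply]
    simp only [hsymm, ← sq]
    exact single_le_sum (fun q _ => sq_nonneg (P p q)) (mem_univ p)
  nlinarith [diag_transpose_mul_self_nonneg M p]

/-- Ky Fan's maximum principle. -/
lemma trace_mul_mul_transpose_le_sumTopEig (hS : S.PosSemidef) {r K : ℕ}
    {V : Matrix (Fin r) (Fin n) ℝ} (hV : V * Vᵀ = 1) (hr : r ≤ K) :
    (V * S * Vᵀ).trace ≤ sumTopEig hS.isHermitian K := by
  set U : Matrix (Fin n) (Fin n) ℝ :=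
    (hS.isHermitian.eigenvectorUnitary : Matrix (Fin n) (Fin n) ℝ)
  set M := V * U
  have hM : M * Mᵀ = 1 := by
    rw [transpose_mul, Matrix.mul_assoc, ← Matrix.mul_assoc U,
      mul_eq_one_comm.mp (transpose_eigenvectorUnitary_mul_self hS.isHermitian), Matrix.one_mul, hV]
  have htrace : (V * S * Vᵀ).trace = ∑ p, hS.isHermitian.eigenvalues p * (Mᵀ * M) p p := by
    rw [← trace_mul_diagonal_mul_transpose]
    conv_lhs => rw [eq_eigenvectorUnitary_mul_diagonal_mul_transpose hS.isHermitian]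
    simp only [M, U, transpose_mul, Matrix.mul_assoc]
  have hmass : ∑ p, (Mᵀ * M) p p ≤ K := by
    change (Mᵀ * M).trace ≤ K
    rw [trace_mul_comm, hM, trace_one, Fintype.card_fin]
    exact_mod_cast hr
  rw [htrace, ← Equiv.sum_comp (eigDescPerm hS.isHermitian)]
  exact sum_mul_le_sum_ite_lt_of_antitone (eigDesc_antitone hS.isHermitian)
    (fun i => hS.eigenvalues_nonneg _) (fun i => diag_transpose_mul_self_nonneg M _)
    (fun i => diag_transpose_mul_self_le_one hM _)
    (by rwa [Equiv.sum_comp (eigDescPerm hS.isHermitian) (fun p => (Mᵀ * M) p p)])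

end Spectral

lemma sum_ite_val_lt_eq_sum_castLE {M : Type*} [AddCommMonoid M] {n : ℕ} (f : Fin n → M)
    (K : ℕ) : (∑ i : Fin n, if (i : ℕ) < K then f i else 0) =
      ∑ j : Fin (min K n), f (Fin.castLE (min_le_right K n) j) := by
  have himage :
      ({i | (i : ℕ) < K} : Finset (Fin n)) = univ.map (Fin.castLEEmb (min_le_right K n)) := by
    ext i
    simp only [mem_filter, mem_univ, true_and, mem_map, Fin.castLEEmb_apply]
    exact ⟨fun h => ⟨⟨i, lt_min h i.isLt⟩, rfl⟩,
      fun ⟨j, hj⟩ => hj ▸ j.isLt.trans_le (min_le_left K n)⟩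
  rw [← sum_filter, himage, sum_map]
  rfl

/-- The top `min K n` eigenvectors attain Ky Fan's bound. -/
lemma exists_mul_transpose_eq_one_trace_eq_sumTopEig {n : ℕ} {S : Matrix (Fin n) (Fin n) ℝ}
    (hS : S.IsHermitian) (K : ℕ) :
    ∃ V : Matrix (Fin (min K n)) (Fin n) ℝ, V * Vᵀ = 1 ∧ (V * S * Vᵀ).trace = sumTopEig hS K := by
  set U : Matrix (Fin n) (Fin n) ℝ := (hS.eigenvectorUnitary : Matrix (Fin n) (Fin n) ℝ)
  set e := eigDescPerm hS ∘ Fin.castLE (min_le_right K n)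
  have he : Function.Injective e := (eigDescPerm hS).injective.comp (Fin.castLE_injective _)
  refine ⟨Uᵀ.submatrix e id, ?_, ?_⟩
  · rw [transpose_submatrix, transpose_transpose, ← submatrix_mul _ _ _ _ _ Function.bijective_id,
      transpose_eigenvectorUnitary_mul_self, submatrix_one _ he]
  · have hsub : Uᵀ.submatrix e id * S * U.submatrix id e = (Uᵀ * S * U).submatrix e e := by
      rw [submatrix_mul _ _ _ id _ Function.bijective_id,
        submatrix_mul _ _ _ id _ Function.bijective_id, submatrix_id_id]
    rw [transpose_submatrix, transpose_transpose, hsub, transpose_eigenvectorUnitary_mul_mul,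
      submatrix_diagonal _ _ he, trace_diagonal, sumTopEig, sum_ite_val_lt_eq_sum_castLE]
    rfl

lemma EuclideanSpace.real_inner_eq_sum {ι : Type*} [Fintype ι] (x y : EuclideanSpace ℝ ι) :
    inner ℝ x y = ∑ c, x c * y c := by
  simp [EuclideanSpace.inner_eq_star_dotProduct, dotProduct, mul_comm]

lemma exists_mul_transpose_eq_one_mul_transpose_mul_eq {κ ι : Type*} [Fintype κ] [Fintype ι]
    (W : Matrix κ ι ℝ) :
    ∃ r ≤ Fintype.card κ, ∃ V : Matrix (Fin r) ι ℝ, V * Vᵀ = 1 ∧ W * Vᵀ * V = W := by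
  set w : κ → EuclideanSpace ℝ ι := fun k => WithLp.toLp 2 (W k)
  set F := Submodule.span ℝ (Set.range w)
  set b := stdOrthonormalBasis ℝ F
  refine ⟨Module.finrank ℝ F, finrank_range_le_card w,
    Matrix.of fun j c => (b j : EuclideanSpace ℝ ι) c, ?_, ?_⟩
  · ext i j
    rw [one_apply, ← orthonormal_iff_ite.mp b.orthonormal i j, Submodule.coe_inner,
      EuclideanSpace.real_inner_eq_sum]
    rfl
  · ext k c
    have hk := congrArg (fun x : F => (x : EuclideanSpace ℝ ι) c)
      (b.sum_repr' ⟨w k, Submodule.subset_span ⟨k, rfl⟩⟩)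
    simp only [Submodule.coe_sum, Submodule.coe_smul, Submodule.coe_inner,
      EuclideanSpace.real_inner_eq_sum, WithLp.ofLp_sum, WithLp.ofLp_smul, Finset.sum_apply,
      Pi.smul_apply, smul_eq_mul, w] at hk
    rw [← hk]
    simp only [mul_apply, of_apply, transpose_apply, mul_comm]

lemma exists_transpose_mul_self_eq_of_le {ι : Type*} [Fintype ι] {r K : ℕ} (hr : r ≤ K)
    (V : Matrix (Fin r) ι ℝ) : ∃ W : Matrix (Fin K) ι ℝ, Wᵀ * W = Vᵀ * V := by
  set J : Matrix (Fin K) (Fin r) ℝ := (1 : Matrix (Fin K) (Fin K) ℝ).submatrix id (Fin.castLE hr)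
  have hJ : Jᵀ * J = 1 := by
    rw [transpose_submatrix, transpose_one, ← submatrix_mul _ _ _ _ _ Function.bijective_id,
      Matrix.one_mul, submatrix_one _ (Fin.castLE_injective hr)]
  refine ⟨J * V, ?_⟩
  rw [transpose_mul, Matrix.mul_assoc, ← Matrix.mul_assoc Jᵀ, hJ, Matrix.one_mul]

lemma sub_sumTopEig_le_frobSq_mul_sub {n C K : ℕ} (A : Matrix (Fin n) (Fin C) ℝ)
    (B : Matrix (Fin n) (Fin K) ℝ) (W : Matrix (Fin K) (Fin C) ℝ) :
    frobSq A - sumTopEig (isHermitian_tmul A) K ≤ frobSq (B * W - A) := by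
  obtain ⟨r, hr, V, hV, hWV⟩ := exists_mul_transpose_eq_one_mul_transpose_mul_eq W
  have hA : (Aᵀ * A).PosSemidef := by simpa using posSemidef_conjTranspose_mul_self A
  calc frobSq A - sumTopEig (isHermitian_tmul A) K ≤ frobSq A - frobSq (A * Vᵀ) := by
        rw [frobSq_mul_transpose]
        exact sub_le_sub_left (trace_mul_mul_transpose_le_sumTopEig hA hV (by simpa using hr)) _
    _ = frobSq (A * Vᵀ * V - A) := (frobSq_mul_transpose_mul_sub hV A).symm
    _ ≤ frobSq (B * W * Vᵀ * V - A) := frobSq_mul_transpose_mul_sub_le hV A (B * W * Vᵀ)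
    _ = frobSq (B * W - A) := by simp only [Matrix.mul_assoc, hWV]

lemma exists_frobSq_mul_transpose_mul_sub_eq {n C : ℕ} (A : Matrix (Fin n) (Fin C) ℝ) (K : ℕ) :
    ∃ W : Matrix (Fin K) (Fin C) ℝ,
      frobSq (A * Wᵀ * W - A) = frobSq A - sumTopEig (isHermitian_tmul A) K := by
  obtain ⟨V, hV, htrace⟩ := exists_mul_transpose_eq_one_trace_eq_sumTopEig (isHermitian_tmul A) K
  obtain ⟨W, hW⟩ := exists_transpose_mul_self_eq_of_le (min_le_left K C) V
  refine ⟨W, ?_⟩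
  rw [Matrix.mul_assoc, hW, ← Matrix.mul_assoc, frobSq_mul_transpose_mul_sub hV,
    frobSq_mul_transpose, htrace]

theorem stmt_6_general {N D C K : ℕ}
    (X : Matrix (Fin N) (Fin D) ℝ) (Y : Matrix (Fin N) (Fin C) ℝ)
    (hrank : X.rank = D) :
    IsLeast
      {t : ℝ | ∃ (V : Matrix (Fin D) (Fin K) ℝ) (W : Matrix (Fin K) (Fin C) ℝ),
        t = frobSq (X * V * W - Y)}
      (frobSq Y - sumTopEig (isHermitian_tmul (ols X Y)) K) := by
  obtain ⟨G, hols⟩ : ∃ G : Matrix (Fin D) (Fin C) ℝ, ols X Y = X * G :=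
    ⟨(Xᵀ * X)⁻¹ * Xᵀ * Y, by simp only [ols, Matrix.mul_assoc]⟩
  have hpyth := frobSq_mul_sub_eq_add G (hols ▸ transpose_mul_sub_ols_eq_zero X Y hrank)
  have hY : frobSq Y = frobSq (X * G) + frobSq (X * G - Y) := by
    simpa [frobSq_neg] using hpyth 0
  rw [hols, hY]
  constructor
  · obtain ⟨W, hW⟩ := exists_frobSq_mul_transpose_mul_sub_eq (X * G) K
    refine ⟨G * Wᵀ, W, ?_⟩
    rw [show X * (G * Wᵀ) * W = X * (G * Wᵀ * W) by simp only [Matrix.mul_assoc],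
      hpyth (G * Wᵀ * W), show X * (G * Wᵀ * W) = X * G * Wᵀ * W by simp only [Matrix.mul_assoc],
      hW]
    ring
  · rintro _ ⟨V, W, rfl⟩
    rw [Matrix.mul_assoc X V W, hpyth (V * W), ← Matrix.mul_assoc X V W]
    linarith [sub_sumTopEig_le_frobSq_mul_sub (X * G) (X * V) W]

/-- the optimal value of the rank-`K` encoder–predictor regression problem
equals `‖Y‖_F²` minus the sum of the `K` largest eigenvalues of `ŶᵀŶ`, where
`Ŷ = X(XᵀX)⁻¹XᵀY` is the OLS prediction of `Y` from `X`. -/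
theorem stmt_6 {N D C K : ℕ}
    (X : Matrix (Fin N) (Fin D) ℝ) (Y : Matrix (Fin N) (Fin C) ℝ)
    (hrank : X.rank = D) (hK1 : 1 ≤ K) (hKD : K ≤ D) :
    IsLeast
      {t : ℝ | ∃ (V : Matrix (Fin D) (Fin K) ℝ) (W : Matrix (Fin K) (Fin C) ℝ),
        t = frobSq (X * V * W - Y)}
      (frobSq Y - sumTopEig (isHermitian_tmul (ols X Y)) K) :=
  stmt_6_general X Y hrank

end
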